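/- Let T be a rooted directed tree of depth h with all leaves at depth h, with transfer functions τ_v drawn independently from a distribution T that is balanced on average (Pr_{f,x}[f(x)=+1] = 1/2 for f drawn from T and x uniform). Then for any leaf ℓ with root path v_0 = ℓ, v_1, ..., v_h = r: E[Inf_ℓ(f_{h,r})] = prod_{i=1}^{h} E[Inf_{v_{i-1}}(τ_{v_i})], and moreover Pr_{T,x}[f_{h,r}(x) = +1] = 1/2. -/

import Mathlib

/-- Rooted directed trees in which all leaves are at depth `h`. -/
inductive BTree : ℕ → Type where
  | leaf : BTree 0
  | node : {h : ℕ} → (d : ℕ) → (Fin d → BTree h) → BTree (h + 1)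

/-- The (index type of the) leaves of a tree. -/
def BTree.Leaves : {h : ℕ} → BTree h → Type
  | _, .leaf => Unit
  | _, .node d c => Σ i : Fin d, (c i).Leaves

def BTree.leavesFintype : {h : ℕ} → (t : BTree h) → Fintype t.Leaves
  | _, .leaf => inferInstanceAs (Fintype Unit)
  | _, .node d c =>
      letI := fun i => (c i).leavesFintype
      inferInstanceAs (Fintype (Σ i : Fin d, (c i).Leaves))

instance instLeavesFintype {h : ℕ} (t : BTree h) : Fintype t.Leaves := t.leavesFintype

def BTree.leavesDecEq : {h : ℕ} → (t : BTree h) → DecidableEq t.Leaves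
  | _, .leaf => inferInstanceAs (DecidableEq Unit)
  | _, .node d c =>
      letI := fun i => (c i).leavesDecEq
      inferInstanceAs (DecidableEq (Σ i : Fin d, (c i).Leaves))

instance instLeavesDecEq {h : ℕ} (t : BTree h) : DecidableEq t.Leaves := t.leavesDecEq

/-- An assignment of a transfer function to every internal vertex of the tree:
a vertex with `d` children gets a function `(Fin d → Bool) → Bool` of its children. -/
def BTree.Labels : {h : ℕ} → BTree h → Type
  | _, .leaf => Unit
  | _, .node d c => ((Fin d → Bool) → Bool) × (∀ i : Fin d, (c i).Labels)

/-- The Boolean function computed at the root: each internal vertex applies its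
transfer function to the values of its children; leaves take the input values. -/
def BTree.eval : {h : ℕ} → (t : BTree h) → t.Labels → (t.Leaves → Bool) → Bool
  | _, .leaf, _, x => x ()
  | _, .node d c, L, x =>
      L.1 fun i => (c i).eval (L.2 i) fun ℓ => x ⟨i, ℓ⟩

/-- The influence of coordinate `i` on `f`: `Pr_x[f(x) ≠ f(x^{(i)})]`, `x` uniform. -/
noncomputable def infl {ι : Type*} [Fintype ι] [DecidableEq ι]
    (f : (ι → Bool) → Bool) (i : ι) : ℝ :=
  ((Finset.univ.filter fun x : ι → Bool => f x ≠ f (Function.update x i (!(x i)))).card : ℝ) /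
    2 ^ (Fintype.card ι)

/-- Expectation of a real random variable under a `PMF`. -/
noncomputable def pexp {α : Type*} (p : PMF α) (X : α → ℝ) : ℝ :=
  ∑' a, (p a).toReal * X a

/-- Product of `PMF`s over `Fin d` (independent coordinates). -/
noncomputable def pmfPi : {d : ℕ} → {α : Fin d → Type} → (∀ i, PMF (α i)) → PMF (∀ i, α i)
  | 0, _, _ => PMF.pure (fun i => i.elim0)
  | _ + 1, _, p =>
      (p 0).bind fun a => (pmfPi fun i => p i.succ).map fun g => Fin.cons a g

/-- Independently draw the transfer function of each internal vertex, the function of a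
`d`-ary vertex being drawn from `T d`. -/
noncomputable def labelPMF (T : ∀ d, PMF ((Fin d → Bool) → Bool)) :
    {h : ℕ} → (t : BTree h) → PMF t.Labels
  | _, .leaf => PMF.pure ()
  | _, .node d c =>
      (T d).bind fun f => (pmfPi fun i => labelPMF T (c i)).map fun Ls => (f, Ls)

/-- `pathProd T t ℓ` is `∏_{k=1}^{h} E[infl_{v_{k-1}}(τ_{v_k})]`, the product of the
expected influences along the path `v_0 = ℓ, v_1, …, v_h = root` from the leaf `ℓ`
to the root. -/
noncomputable def pathProd (T : ∀ d, PMF ((Fin d → Bool) → Bool)) :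
    {h : ℕ} → (t : BTree h) → t.Leaves → ℝ
  | _, .leaf, _ => 1
  | _, .node d c, ℓ => pexp (T d) (fun f => infl f ℓ.1) * pathProd T (c ℓ.1) ℓ.2

/-! The subtrees of the root read disjoint blocks of the uniform input and carry independent
labels, so their outputs `y_i` are independent; by induction each is a fair coin, hence the root
outputs `f y` for a uniform `y`, and averaging over `f ∼ T d` gives probability `1/2` by balance.

Flipping the leaf `⟨j, ℓ⟩` changes only `y_j`, so it flips the root iff `ℓ` is pivotal for
child `j` and `j` is pivotal for `f` at `y`. Flipping `ℓ` is an involution of the input that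
swaps the two values of child `j` on the event that `ℓ` is pivotal for it, so on that event
`y_j` is still a fair coin. Hence the influence of `⟨j, ℓ⟩` on the root is `E[infl f j]` times
the influence of `ℓ` on child `j`, and induction gives the product along the path. -/

open Finset Function
open scoped BigOperators

section Pexp

variable {α β : Type*}

lemma pexp_eq_sum [Fintype α] (p : PMF α) (X : α → ℝ) :
    pexp p X = ∑ a, (p a).toReal * X a :=
  tsum_fintype _

lemma pexp_pure (a : α) (X : α → ℝ) : pexp (PMF.pure a) X = X a := by
  rw [pexp, tsum_eq_single a] <;> simp_all [PMF.pure_apply]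

variable [Fintype α]

lemma pexp_const (p : PMF α) (r : ℝ) : pexp p (fun _ => r) = r := by
  rw [pexp_eq_sum, ← Finset.sum_mul, ← ENNReal.toReal_sum (fun a _ => p.apply_ne_top a),
    ← tsum_fintype (L := .unconditional _), p.tsum_coe, ENNReal.toReal_one, one_mul]

lemma pexp_sub (p : PMF α) (X Y : α → ℝ) :
    pexp p (fun a => X a - Y a) = pexp p X - pexp p Y := by
  simp only [pexp_eq_sum, mul_sub, Finset.sum_sub_distrib]

lemma pexp_sum {ι : Type*} (p : PMF α) (s : Finset ι) (X : ι → α → ℝ) :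
    pexp p (fun a => ∑ i ∈ s, X i a) = ∑ i ∈ s, pexp p (X i) := by
  simp only [pexp_eq_sum, Finset.mul_sum]
  exact Finset.sum_comm

lemma pexp_const_mul (p : PMF α) (r : ℝ) (X : α → ℝ) :
    pexp p (fun a => r * X a) = r * pexp p X := by
  simp only [pexp_eq_sum, Finset.mul_sum, mul_left_comm]

lemma pexp_mul_const (p : PMF α) (X : α → ℝ) (r : ℝ) :
    pexp p (fun a => X a * r) = pexp p X * r := by
  simp only [pexp_eq_sum, Finset.sum_mul, mul_assoc]

lemma pexp_bind [Fintype β] (p : PMF α) (q : α → PMF β) (X : β → ℝ) :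
    pexp (p.bind q) X = pexp p fun a => pexp (q a) X := by
  simp only [pexp_eq_sum, PMF.bind_apply, tsum_fintype]
  simp only [ENNReal.toReal_sum fun a _ =>
      ENNReal.mul_ne_top (p.apply_ne_top a) ((q a).apply_ne_top _), ENNReal.toReal_mul,
    Finset.sum_mul, Finset.mul_sum, mul_assoc]
  exact Finset.sum_comm

lemma pexp_map [Fintype β] (p : PMF α) (g : α → β) (X : β → ℝ) :
    pexp (p.map g) X = pexp p fun a => X (g a) := by
  simp only [PMF.map, pexp_bind, Function.comp_apply, pexp_pure]

end Pexp

lemma pexp_pmfPi_prod : ∀ {d : ℕ} {α : Fin d → Type} [∀ i, Fintype (α i)]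
    (p : ∀ i, PMF (α i)) (φ : ∀ i, α i → ℝ),
    pexp (pmfPi p) (fun g => ∏ i, φ i (g i)) = ∏ i, pexp (p i) (φ i)
  | 0, _, _, _, _ => by simp [pmfPi, pexp_pure]
  | d + 1, _, _, p, φ => by
      simp only [pmfPi, pexp_bind, pexp_map, Fin.prod_univ_succ, Fin.cons_zero, Fin.cons_succ,
        pexp_const_mul, pexp_pmfPi_prod fun i : Fin d => p i.succ]
      exact pexp_mul_const _ _ _

lemma Fintype.expect_pi_prod {ι K : Type*} [Fintype ι] [DecidableEq ι] {X : ι → Type*}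
    [∀ i, Fintype (X i)] [Semifield K] [CharZero K] (g : ∀ i, X i → K) :
    𝔼 z : (∀ i, X i), ∏ i, g i (z i) = ∏ i, 𝔼 w, g i w := by
  simp only [Fintype.expect_eq_sum_div_card, ← Fintype.prod_sum, Fintype.card_pi, Nat.cast_prod,
    Finset.prod_div_distrib]

lemma Fintype.sum_mul_prod_ite_eq {ι β R : Type*} [Fintype ι] [DecidableEq ι] [Fintype β]
    [DecidableEq β] [CommSemiring R] (F : (ι → β) → R) (y₀ : ι → β) (a : ι → R) :
    ∑ y, F y * ∏ i, (if y₀ i = y i then a i else 0) = F y₀ * ∏ i, a i := by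
  rw [Fintype.sum_eq_single y₀]
  · simp
  · intro y hy
    obtain ⟨i, hi⟩ := Function.ne_iff.1 hy
    rw [Finset.prod_eq_zero (Finset.mem_univ i) (if_neg (Ne.symm hi)), mul_zero]

lemma Fintype.card_filter_div_card_eq_expect {α K : Type*} [Fintype α] [Semifield K]
    [CharZero K] (P : α → Prop) [DecidablePred P] :
    (#{x | P x} : K) / Fintype.card α = 𝔼 x, if P x then 1 else 0 := by
  rw [Fintype.expect_eq_sum_div_card, Finset.sum_boole]

lemma Fintype.expect_eq_and_eq_half_of_involutive {α : Type*} [Fintype α] {σ : α → α}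
    (hσ : Involutive σ) (P : α → Prop) [DecidablePred P] (hP : ∀ x, P (σ x) ↔ P x) (φ : α → Bool)
    (hφ : ∀ x, P x → φ (σ x) = !φ x) (b : Bool) :
    𝔼 x, (if φ x = b ∧ P x then (1 : ℝ) else 0) = (𝔼 x, if P x then (1 : ℝ) else 0) / 2 := by
  have swap : 𝔼 x, (if φ x = b ∧ P x then (1 : ℝ) else 0)
      = 𝔼 x, (if φ x = !b ∧ P x then (1 : ℝ) else 0) := by
    refine Fintype.expect_equiv hσ.toPerm _ _ fun x => ?_
    by_cases hx : P x <;> simp [hx, hP, hφ]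
  have split : ∀ x, (if φ x = b ∧ P x then (1 : ℝ) else 0) + (if φ x = !b ∧ P x then 1 else 0)
      = if P x then 1 else 0 := by
    intro x
    by_cases hx : P x <;> cases b <;> cases φ x <;> simp [hx]
  have total : 𝔼 x, (if P x then (1 : ℝ) else 0)
      = 2 * 𝔼 x, (if φ x = b ∧ P x then (1 : ℝ) else 0) := by
    simp only [← split, Finset.expect_add_distrib, ← swap, two_mul]
  rw [total]
  ring

abbrev IsPivotal {ι : Type*} [DecidableEq ι] (f : (ι → Bool) → Bool) (i : ι) (x : ι → Bool) :
    Prop :=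
  f x ≠ f (update x i (!x i))

lemma apply_ne_apply_update_iff {ι : Type*} [DecidableEq ι] (f : (ι → Bool) → Bool)
    (y : ι → Bool) (j : ι) (v : Bool) :
    f y ≠ f (update y j v) ↔ IsPivotal f j y ∧ y j ≠ v := by
  by_cases h : y j = v
  · simp [← h]
  · obtain rfl : v = !y j := by cases v <;> cases hy : y j <;> simp_all
    simp [IsPivotal]

section BooleanFunction

variable {ι : Type*} [Fintype ι] [DecidableEq ι]

lemma card_filter_div_two_pow_eq_expect (P : (ι → Bool) → Prop) [DecidablePred P] :
    (#{x | P x} : ℝ) / 2 ^ Fintype.card ι = 𝔼 x, if P x then 1 else 0 := by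
  rw [← Fintype.card_filter_div_card_eq_expect]
  simp

lemma infl_eq_expect (f : (ι → Bool) → Bool) (i : ι) :
    infl f i = 𝔼 x, if IsPivotal f i x then 1 else 0 :=
  card_filter_div_two_pow_eq_expect _

lemma expect_eq_and_isPivotal (f : (ι → Bool) → Bool) (i : ι) (b : Bool) :
    𝔼 x, (if f x = b ∧ IsPivotal f i x then (1 : ℝ) else 0) = infl f i / 2 := by
  have hσ : Involutive fun x : ι → Bool => update x i (!x i) := fun x => by simp
  rw [infl_eq_expect]
  refine Fintype.expect_eq_and_eq_half_of_involutive hσ _ (fun x => ?_) f (fun x hx => ?_) b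
  · simp [IsPivotal, ne_comm]
  · cases h : f x <;> cases h' : f (update x i (!x i)) <;> simp_all [IsPivotal]

lemma expect_eq_sum_mul_half_pow (F : (ι → Bool) → ℝ) :
    𝔼 y, F y = ∑ y, F y * (1 / 2) ^ Fintype.card ι := by
  simp [Fintype.expect_eq_sum_div_card, div_eq_mul_inv, Finset.sum_mul]

end BooleanFunction

lemma pexp_expect_eq_half_of_balanced (T : ∀ d, PMF ((Fin d → Bool) → Bool))
    (hbal : ∀ d, pexp (T d) (fun f => (#{x : Fin d → Bool | f x = true} : ℝ) / 2 ^ d) = 1 / 2)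
    (d : ℕ) (b : Bool) : pexp (T d) (fun f => 𝔼 y, if f y = b then 1 else 0) = 1 / 2 := by
  have htrue : pexp (T d) (fun f => 𝔼 y, if f y = true then 1 else 0) = 1 / 2 := by
    rw [← hbal d]
    congr 1 with f
    rw [← card_filter_div_two_pow_eq_expect, Fintype.card_fin]
  cases b
  · have hcompl : ∀ f : (Fin d → Bool) → Bool, (𝔼 y, if f y = false then (1 : ℝ) else 0)
        = 1 - 𝔼 y, if f y = true then 1 else 0 := by
      intro f
      rw [← Fintype.expect_const (ι := Fin d → Bool) (1 : ℝ), ← Finset.expect_sub_distrib]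
      exact Finset.expect_congr rfl fun y _ => by cases f y <;> simp
    simp only [hcompl, pexp_sub, pexp_const, htrue]
    norm_num
  · exact htrue

def BTree.labelsFintype : {h : ℕ} → (t : BTree h) → Fintype t.Labels
  | _, .leaf => inferInstanceAs (Fintype Unit)
  | _, .node d c =>
      letI := fun i => (c i).labelsFintype
      inferInstanceAs (Fintype (((Fin d → Bool) → Bool) × (∀ i : Fin d, (c i).Labels)))

instance instLabelsFintype {h : ℕ} (t : BTree h) : Fintype t.Labels := t.labelsFintype

namespace BTree

variable (T : ∀ d, PMF ((Fin d → Bool) → Bool))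

noncomputable def avg {h : ℕ} (t : BTree h) (G : t.Labels → (t.Leaves → Bool) → ℝ) :
    ℝ :=
  pexp (labelPMF T t) fun L => 𝔼 x, G L x

lemma avg_leaf (G : leaf.Labels → (leaf.Leaves → Bool) → ℝ) :
    leaf.avg T G = 𝔼 x, G () x :=
  pexp_pure _ _

lemma avg_node {h d : ℕ} (c : Fin d → BTree h)
    (G : (node d c).Labels → ((node d c).Leaves → Bool) → ℝ) :
    (node d c).avg T G = pexp (T d) fun f => pexp (pmfPi fun i => labelPMF T (c i)) fun Ls =>
      𝔼 z : (∀ i, (c i).Leaves → Bool), G (f, Ls) (Sigma.uncurry z) := by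
  simp only [avg, labelPMF, pexp_bind]
  congr 1 with f
  refine (pexp_map _ (fun Ls => ((f, Ls) : (node d c).Labels)) _).trans ?_
  congr 1 with Ls
  exact Fintype.expect_equiv (Equiv.piCurry fun _ _ => Bool) _ _ fun x => by simp

lemma pexp_pmfPi_expect_prod {h d : ℕ} (c : Fin d → BTree h)
    (g : ∀ i, (c i).Labels → ((c i).Leaves → Bool) → ℝ) :
    pexp (pmfPi fun i => labelPMF T (c i))
        (fun Ls => 𝔼 z : (∀ i, (c i).Leaves → Bool), ∏ i, g i (Ls i) (z i))
      = ∏ i, (c i).avg T (g i) := by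
  simp only [Fintype.expect_pi_prod]
  exact pexp_pmfPi_prod (fun i => labelPMF T (c i)) fun i L => 𝔼 w, g i L w

lemma pexp_pmfPi_expect_mul_prod {h d : ℕ} (c : Fin d → BTree h) (F : (Fin d → Bool) → ℝ)
    (a : ∀ i, (c i).Labels → ((c i).Leaves → Bool) → ℝ) :
    pexp (pmfPi fun i => labelPMF T (c i)) (fun Ls => 𝔼 z : (∀ i, (c i).Leaves → Bool),
        F (fun i => (c i).eval (Ls i) (z i)) * ∏ i, a i (Ls i) (z i))
      = ∑ y, F y * ∏ i, (c i).avg T fun L w => if (c i).eval L w = y i then a i L w else 0 := by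
  have expand : ∀ (Ls : ∀ i, (c i).Labels) (z : ∀ i, (c i).Leaves → Bool),
      F (fun i => (c i).eval (Ls i) (z i)) * ∏ i, a i (Ls i) (z i)
        = ∑ y, F y * ∏ i, if (c i).eval (Ls i) (z i) = y i then a i (Ls i) (z i) else 0 :=
    fun Ls z => (Fintype.sum_mul_prod_ite_eq F _ _).symm
  simp only [expand, Finset.expect_sum_comm, pexp_sum, ← Finset.mul_expect, pexp_const_mul]
  exact Finset.sum_congr rfl fun y _ => congrArg (F y * ·) <|
    pexp_pmfPi_expect_prod T c fun i L w => if (c i).eval L w = y i then a i L w else 0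

theorem avg_eval_eq_half
    (hbal : ∀ d b, pexp (T d) (fun f => 𝔼 y, if f y = b then 1 else 0) = 1 / 2)
    {h : ℕ} (t : BTree h) (b : Bool) :
    t.avg T (fun L x => if t.eval L x = b then 1 else 0) = 1 / 2 := by
  induction t generalizing b with
  | leaf =>
    rw [avg_leaf]
    calc _ = 𝔼 y : Bool, if y = b then (1 : ℝ) else 0 :=
          Fintype.expect_equiv (Equiv.funUnique Unit Bool) _ _ fun _ => rfl
      _ = 1 / 2 := by simp
  | node d c ih =>
    have children : ∀ f : (Fin d → Bool) → Bool, pexp (pmfPi fun i => labelPMF T (c i))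
        (fun Ls => 𝔼 z : (∀ i, (c i).Leaves → Bool),
          if (node d c).eval (f, Ls) (Sigma.uncurry z) = b then 1 else 0)
        = 𝔼 y, if f y = b then 1 else 0 := by
      intro f
      have h := pexp_pmfPi_expect_mul_prod T c (fun y => if f y = b then 1 else 0) fun _ _ _ => 1
      simp only [Finset.prod_const_one, mul_one, ih] at h
      rw [expect_eq_sum_mul_half_pow]
      exact h.trans (by simp)
    rw [avg_node, funext children]
    exact hbal d b

lemma eval_node_update {h d : ℕ} (c : Fin d → BTree h) (f : (Fin d → Bool) → Bool)
    (Ls : ∀ i, (c i).Labels) (z : ∀ i, (c i).Leaves → Bool) (j : Fin d) (ℓ : (c j).Leaves)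
    (v : Bool) :
    (node d c).eval (f, Ls) (update (Sigma.uncurry z) ⟨j, ℓ⟩ v)
      = f (update (fun i => (c i).eval (Ls i) (z i)) j
          ((c j).eval (Ls j) (update (z j) ℓ v))) := by
  show f _ = f _
  congr 1 with i
  by_cases hij : i = j
  · subst hij
    rw [update_self]
    congr 1 with m
    by_cases hm : m = ℓ
    · subst hm
      exact (update_self _ _ _).trans (update_self m v (z i)).symm
    · have hne : (⟨i, m⟩ : (node d c).Leaves) ≠ ⟨i, ℓ⟩ := fun h =>
        hm (eq_of_heq (Sigma.mk.inj h).2)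
      rw [update_of_ne hm]
      exact update_of_ne hne _ _
  · rw [update_of_ne hij]
    congr 1 with m
    exact update_of_ne (fun h => hij (congrArg Sigma.fst h)) _ _

lemma isPivotal_node_iff {h d : ℕ} (c : Fin d → BTree h) (f : (Fin d → Bool) → Bool)
    (Ls : ∀ i, (c i).Labels) (z : ∀ i, (c i).Leaves → Bool) (j : Fin d) (ℓ : (c j).Leaves) :
    IsPivotal ((node d c).eval (f, Ls)) ⟨j, ℓ⟩ (Sigma.uncurry z)
      ↔ IsPivotal f j (fun i => (c i).eval (Ls i) (z i))
        ∧ IsPivotal ((c j).eval (Ls j)) ℓ (z j) := by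
  show _ ≠ (node d c).eval (f, Ls) (update (Sigma.uncurry z) ⟨j, ℓ⟩ (!z j ℓ)) ↔ _
  rw [eval_node_update]
  exact apply_ne_apply_update_iff f _ j _

lemma avg_eval_eq_and_isPivotal {h : ℕ} (t : BTree h) (ℓ : t.Leaves) (b : Bool) :
    t.avg T (fun L x => if t.eval L x = b ∧ IsPivotal (t.eval L) ℓ x then 1 else 0)
      = t.avg T (fun L x => if IsPivotal (t.eval L) ℓ x then 1 else 0) / 2 := by
  simp only [avg, expect_eq_and_isPivotal, div_eq_mul_inv, ← infl_eq_expect]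
  exact pexp_mul_const _ _ _

theorem avg_isPivotal_eq_pathProd
    (hbal : ∀ d b, pexp (T d) (fun f => 𝔼 y, if f y = b then 1 else 0) = 1 / 2)
    {h : ℕ} (t : BTree h) (ℓ : t.Leaves) :
    t.avg T (fun L x => if IsPivotal (t.eval L) ℓ x then 1 else 0) = pathProd T t ℓ := by
  induction t with
  | leaf =>
    rw [avg_leaf]
    calc _ = 𝔼 _x : leaf.Leaves → Bool, (1 : ℝ) :=
          Finset.expect_congr rfl fun x _ => if_pos <| by
          show x ℓ ≠ update x ℓ (!x ℓ) ℓ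
          simp
      _ = 1 := Fintype.expect_const _
  | node d c ih =>
    obtain ⟨j, ℓ⟩ := ℓ
    set P := pathProd T (c j) ℓ
    -- the condition the chain rule for pivotality puts on child `i`
    let a : ∀ i, (c i).Labels → ((c i).Leaves → Bool) → ℝ := update (fun _ _ _ => 1) j
      fun L w => if IsPivotal ((c j).eval L) ℓ w then 1 else 0
    have chain : ∀ f Ls (z : ∀ i, (c i).Leaves → Bool),
        (if IsPivotal ((node d c).eval (f, Ls)) ⟨j, ℓ⟩ (Sigma.uncurry z) then (1 : ℝ) else 0)
          = (if IsPivotal f j (fun i => (c i).eval (Ls i) (z i)) then 1 else 0)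
            * ∏ i, a i (Ls i) (z i) := by
      intro f Ls z
      rw [Fintype.prod_eq_single j fun i hi => by simp [a, update_of_ne hi]]
      simp only [a, update_self, ite_zero_mul_ite_zero, mul_one]
      exact if_congr (isPivotal_node_iff c f Ls z j ℓ) rfl rfl
    have children : ∀ y : Fin d → Bool,
        ∏ i, (c i).avg T (fun L w => if (c i).eval L w = y i then a i L w else 0)
          = (1 / 2) ^ d * P := by
      intro y
      have factor : ∀ i, (c i).avg T (fun L w => if (c i).eval L w = y i then a i L w else 0)
          = 1 / 2 * if i = j then P else 1 := by
        intro i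
        by_cases hij : i = j
        · subst hij
          simp only [a, update_self, ← ite_and, avg_eval_eq_and_isPivotal, ih, if_true]
          ring
        · simp only [a, update_of_ne hij, if_neg hij, mul_one]
          exact avg_eval_eq_half T hbal (c i) (y i)
      rw [Finset.prod_congr rfl fun i _ => factor i, Finset.prod_mul_distrib, Finset.prod_const,
        card_univ, Fintype.card_fin, Fintype.prod_ite_eq']
    have root : ∀ f, pexp (pmfPi fun i => labelPMF T (c i))
        (fun Ls => 𝔼 z : (∀ i, (c i).Leaves → Bool),
          if IsPivotal ((node d c).eval (f, Ls)) ⟨j, ℓ⟩ (Sigma.uncurry z) then 1 else 0)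
          = infl f j * P := by
      intro f
      simp only [chain]
      rw [pexp_pmfPi_expect_mul_prod T c (fun y => if IsPivotal f j y then 1 else 0) a]
      simp only [children, infl_eq_expect, expect_eq_sum_mul_half_pow, Fintype.card_fin,
        Finset.sum_mul, mul_assoc]
    rw [avg_node, funext root]
    exact pexp_mul_const _ _ _

end BTree

/-- For a tree of depth `h` whose transfer functions are drawn independently from a
family `T` that is balanced on average (`Pr_{f,x}[f(x) = +1] = 1/2` in each arity),
the expected influence of a leaf on the root function equals the product of expected
edge influences along the leaf-to-root path, and moreover the root's value on a
uniform random input is `+1` with probability `1/2`. -/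
theorem stmt13 (T : ∀ d, PMF ((Fin d → Bool) → Bool))
    (hbal : ∀ d, pexp (T d)
        (fun f => ((Finset.univ.filter fun x : Fin d → Bool => f x = true).card : ℝ) / 2 ^ d)
      = 1 / 2)
    {h : ℕ} (t : BTree h) (ℓ : t.Leaves) :
    pexp (labelPMF T t) (fun L => infl (t.eval L) ℓ) = pathProd T t ℓ ∧
    pexp (labelPMF T t)
        (fun L => ((Finset.univ.filter fun x : t.Leaves → Bool => t.eval L x = true).card : ℝ) /
          2 ^ (Fintype.card t.Leaves))
      = 1 / 2 := by
  have hhalf := pexp_expect_eq_half_of_balanced T hbal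
  constructor
  · simpa only [infl_eq_expect, BTree.avg] using BTree.avg_isPivotal_eq_pathProd T hhalf t ℓ
  · simpa only [card_filter_div_two_pow_eq_expect, BTree.avg] using
      BTree.avg_eval_eq_half T hhalf t true
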